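/- arXiv:1103.2344 — 11 statements merged into one kernel-verified Lean document; each statement's English description precedes it below -/
import Mathlib

section
/- Let M be a monoid and let D : M × M → ℕ be a function attaining a maximum value l ∈ ℕ (i.e. D(m, m') ≤ l for all m, m', and D takes the value l). Define d : M × M → ℕ by d(m, m') = 2l − 2D(m, m'). Then D satisfies the length-function axioms (L1)–(L4) if and only if both: (i) d is a quasi-ultrametric, i.e. d(x, y) = d(y, x), d(x, x) = 0, and d(x, z) ≤ max(d(x, y), d(y, z)) for all x, y, z ∈ M; and (ii) d(m'·m, m''·m) ≤ d(m', m'') for all m, m', m'' ∈ M. -/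
/-- For a function `D : M × M → ℕ` with maximum value `l`, setting
`d(m, m') = 2l - 2 D(m, m')`, the length-function axioms (L1)–(L4) for `D` are
equivalent to: `d` is a quasi-ultrametric and `d` is non-increasing under right
translation. -/
theorem stmt_3 {M : Type*} [Monoid M] (D : M → M → ℕ) (l : ℕ)
    (hle : ∀ m m' : M, D m m' ≤ l) (hattain : ∃ m m' : M, D m m' = l) :
    let d : M → M → ℕ := fun x y => 2 * l - 2 * D x y
    ((∀ m m' : M, D m m' = D m' m) ∧
     (∀ m m' m'' : M, D m' m'' ≤ D m m) ∧
     (∀ m m' m'' : M, D m' m'' ≤ D (m' * m) (m'' * m)) ∧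
     (∀ m m' m'' : M, min (D m m') (D m' m'') ≤ D m m'')) ↔
    (((∀ x y : M, d x y = d y x) ∧
      (∀ x : M, d x x = 0) ∧
      (∀ x y z : M, d x z ≤ max (d x y) (d y z))) ∧
     (∀ m m' m'' : M, d (m' * m) (m'' * m) ≤ d m' m'')) := by
  intro d
  obtain ⟨a, b, hab⟩ := hattain
  constructor
  · rintro ⟨h1, h2, h3, h4⟩
    refine ⟨⟨?_, ?_, ?_⟩, ?_⟩
    · intro x y
      have := h1 x y
      simp only [d]; omega
    · intro x
      have h := h2 x a b
      have := hle x x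
      simp only [d]; omega
    · intro x y z
      have := h4 x y z
      have := hle x y
      have := hle y z
      have := hle x z
      simp only [d]; omega
    · intro m m' m''
      have := h3 m m' m''
      have := hle m' m''
      have := hle (m' * m) (m'' * m)
      simp only [d]; omega
  · rintro ⟨⟨h1, h2, h3⟩, h4⟩
    have hdiag : ∀ x : M, D x x = l := by
      intro x
      have := h2 x
      have := hle x x
      simp only [d] at *
      omega
    refine ⟨?_, ?_, ?_, ?_⟩
    · intro m m'
      have := h1 m m'
      have := hle m m'
      have := hle m' m
      simp only [d] at *
      omega
    · intro m m' m''
      have := hle m' m''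
      rw [hdiag m]
      exact this
    · intro m m' m''
      have := h4 m m' m''
      have := hle m' m''
      have := hle (m' * m) (m'' * m)
      simp only [d] at *
      omega
    · intro m m' m''
      have := h3 m m' m''
      have := hle m m'
      have := hle m' m''
      have := hle m m''
      simp only [d] at *
      omega
end

section
/- Let M be a monoid and let D : M × M → ℕ∞ be a length function (axioms (L1)–(L4)) whose maximum value is a finite number l ∈ ℕ, so that D(m, m') ≤ l for all m, m' and D(m, m) = l for all m. On P = {0, 1, …, l} × M, the relation (k, m) ∼ (k', m') ⇔ (k = k' and D(m, m') ≥ k) is an equivalence relation; write [k, m] for the equivalence class of (k, m). Then the simple graph on the quotient P/∼ in which two distinct classes are adjacent if and only if they can be written as [k, m] and [k+1, m] for some 0 ≤ k < l and m ∈ M is a tree (connected and without cycles). -/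
/-!
Grade the classes by their level `k`. Adjacent classes differ in level by exactly one, and a class
`[k+1, m]` has the single lower neighbour `[k, m]`: if `[k+1, m] = [k+1, m']` then
`D(m, m') ≥ k+1 ≥ k`, so `[k, m] = [k, m']`. Descending along lower neighbours connects every class
to the unique class `[0, m]` of level `0`. A cycle has no room for this rule at a vertex of
maximal level, whose two neighbours on the cycle are distinct and both one level lower.
-/

namespace SimpleGraph

variable {V : Type*} {G : SimpleGraph V}

theorem exists_reachable_of_height_eq_zero (h : V → ℕ)
    (hdesc : ∀ x, 0 < h x → ∃ y, G.Adj x y ∧ h y < h x) (x : V) :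
    ∃ z, h z = 0 ∧ G.Reachable x z := by
  rcases Nat.eq_zero_or_pos (h x) with hx | hx
  · exact ⟨x, hx, .rfl⟩
  · obtain ⟨y, hxy, hlt⟩ := hdesc x hx
    obtain ⟨z, hz, hyz⟩ := exists_reachable_of_height_eq_zero h hdesc y
    exact ⟨z, hz, hxy.reachable.trans hyz⟩
termination_by h x

theorem connected_of_height [Nonempty V] (h : V → ℕ)
    (hdesc : ∀ x, 0 < h x → ∃ y, G.Adj x y ∧ h y < h x)
    (hzero : ∀ x y, h x = 0 → h y = 0 → x = y) : G.Connected := by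
  refine (connected_iff G).mpr ⟨fun x y => ?_, ‹_›⟩
  obtain ⟨z, hz, hxz⟩ := exists_reachable_of_height_eq_zero h hdesc x
  obtain ⟨z', hz', hyz'⟩ := exists_reachable_of_height_eq_zero h hdesc y
  exact hxz.trans (hzero z z' hz hz' ▸ hyz'.symm)

theorem isAcyclic_of_height (h : V → ℕ)
    (hadj : ∀ ⦃x y⦄, G.Adj x y → h x = h y + 1 ∨ h y = h x + 1)
    (hparent : ∀ ⦃x y z⦄, G.Adj x y → G.Adj x z → h x = h y + 1 → h x = h z + 1 → y = z) :
    G.IsAcyclic := by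
  classical
  intro v c hc
  obtain ⟨u, hu, hmax⟩ := c.support.toFinset.exists_max_image h ⟨v, by simp⟩
  rw [List.mem_toFinset] at hu
  set c' := c.rotate u hu
  have hc' : c'.IsCycle := hc.rotate hu
  have below : ∀ w ∈ c'.support, G.Adj u w → h u = h w + 1 := fun w hw huw => by
    have := hmax w (List.mem_toFinset.mpr ((c.mem_support_rotate_iff u hu).mp hw))
    have := hadj huw
    omega
  have hsnd := c'.adj_snd hc'.not_nil
  have hpen := (c'.adj_penultimate hc'.not_nil).symm
  exact hc'.snd_ne_penultimate <| hparent hsnd hpen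
    (below _ (c'.getVert_mem_support 1) hsnd) (below _ (c'.getVert_mem_support _) hpen)

end SimpleGraph

namespace Chiswell

variable {M : Type*} (D : M → M → ℕ∞) (l : ℕ)

def rel : Fin (l + 1) × M → Fin (l + 1) × M → Prop := fun p q =>
  p.1 = q.1 ∧ ((p.1 : ℕ) : ℕ∞) ≤ D p.2 q.2

theorem rel_equivalence (hL1 : ∀ m m' : M, D m m' = D m' m)
    (hL4 : ∀ m m' m'' : M, min (D m m') (D m' m'') ≤ D m m'')
    (hdiag : ∀ m : M, D m m = (l : ℕ∞)) : Equivalence (rel D l) where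
  refl p := ⟨rfl, hdiag p.2 ▸ by exact_mod_cast p.1.is_le⟩
  symm := fun ⟨h1, h2⟩ => ⟨h1.symm, h1 ▸ hL1 _ _ ▸ h2⟩
  trans := fun ⟨h1, h2⟩ ⟨h3, h4⟩ => ⟨h1.trans h3, (le_min h2 (h1 ▸ h4)).trans (hL4 _ _ _)⟩

def height : Quot (rel D l) → ℕ :=
  Quot.lift (fun p => (p.1 : ℕ)) fun _ _ h => congrArg Fin.val h.1

def graph : SimpleGraph (Quot (rel D l)) :=
  SimpleGraph.fromRel fun x y => ∃ (k : Fin l) (m : M),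
    x = Quot.mk (rel D l) (k.castSucc, m) ∧ y = Quot.mk (rel D l) (k.succ, m)

variable {D l}

theorem adj_succ_castSucc (k : Fin l) (m : M) :
    (graph D l).Adj (Quot.mk _ (k.succ, m)) (Quot.mk _ (k.castSucc, m)) := by
  refine (SimpleGraph.fromRel_adj _ _ _).mpr ⟨fun h => ?_, .inr ⟨k, m, rfl, rfl⟩⟩
  simpa [height] using congrArg (height D l) h

theorem exists_eq_of_adj {x y : Quot (rel D l)} (hxy : (graph D l).Adj x y) :
    ∃ (k : Fin l) (m : M),
      (x = Quot.mk _ (k.castSucc, m) ∧ y = Quot.mk _ (k.succ, m)) ∨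
      (x = Quot.mk _ (k.succ, m) ∧ y = Quot.mk _ (k.castSucc, m)) := by
  rcases ((SimpleGraph.fromRel_adj _ _ _).mp hxy).2 with ⟨k, m, hx, hy⟩ | ⟨k, m, hy, hx⟩
  exacts [⟨k, m, .inl ⟨hx, hy⟩⟩, ⟨k, m, .inr ⟨hx, hy⟩⟩]

theorem height_adj {x y : Quot (rel D l)} (hxy : (graph D l).Adj x y) :
    height D l x = height D l y + 1 ∨ height D l y = height D l x + 1 := by
  obtain ⟨k, m, ⟨rfl, rfl⟩ | ⟨rfl, rfl⟩⟩ := exists_eq_of_adj hxy <;> simp [height]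

theorem exists_eq_of_adj_of_height_eq_succ {x y : Quot (rel D l)} (hxy : (graph D l).Adj x y)
    (hh : height D l x = height D l y + 1) :
    ∃ (k : Fin l) (m : M), x = Quot.mk _ (k.succ, m) ∧ y = Quot.mk _ (k.castSucc, m) := by
  obtain ⟨k, m, ⟨rfl, rfl⟩ | hkm⟩ := exists_eq_of_adj hxy
  · simp [height] at hh; omega
  · exact ⟨k, m, hkm⟩

theorem eq_of_adj_of_height_eq_succ (hr : Equivalence (rel D l)) {x y z : Quot (rel D l)}
    (hxy : (graph D l).Adj x y) (hxz : (graph D l).Adj x z)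
    (hy : height D l x = height D l y + 1) (hz : height D l x = height D l z + 1) : y = z := by
  obtain ⟨k, m, rfl, rfl⟩ := exists_eq_of_adj_of_height_eq_succ hxy hy
  obtain ⟨k', m', hx, rfl⟩ := exists_eq_of_adj_of_height_eq_succ hxz hz
  obtain ⟨hk, hD⟩ := (hr.quot_mk_eq_iff _ _).mp hx
  obtain rfl : k = k' := Fin.succ_injective _ hk
  refine Quot.sound ⟨rfl, le_trans ?_ hD⟩
  simp

theorem exists_adj_height_lt (x : Quot (rel D l)) (hx : 0 < height D l x) :
    ∃ y, (graph D l).Adj x y ∧ height D l y < height D l x := by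
  induction x using Quot.ind with | mk p =>
  obtain ⟨a, m⟩ := p
  obtain ⟨k, rfl⟩ := Fin.exists_succ_eq_of_ne_zero (Fin.pos_iff_ne_zero.mp hx)
  exact ⟨_, adj_succ_castSucc k m, by simp [height]⟩

theorem eq_of_height_eq_zero (x y : Quot (rel D l)) (hx : height D l x = 0)
    (hy : height D l y = 0) : x = y := by
  induction x using Quot.ind with | mk p =>
  induction y using Quot.ind with | mk q =>
  have hpq : p.1 = q.1 := Fin.ext (hx.trans hy.symm)
  exact Quot.sound ⟨hpq, by simp [height] at hx; simp [hx]⟩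

instance [Nonempty M] : Nonempty (Quot (rel D l)) :=
  ⟨Quot.mk _ (0, Classical.arbitrary M)⟩

theorem graph_isTree [Nonempty M] (hr : Equivalence (rel D l)) : (graph D l).IsTree :=
  ⟨SimpleGraph.connected_of_height (height D l) exists_adj_height_lt eq_of_height_eq_zero,
    SimpleGraph.isAcyclic_of_height (height D l) (fun _ _ => height_adj)
      (fun _ _ _ => eq_of_adj_of_height_eq_succ hr)⟩

end Chiswell

theorem stmt_7_general {M : Type*} [Monoid M] (D : M → M → ℕ∞) (l : ℕ)
    (hL1 : ∀ m m' : M, D m m' = D m' m)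
    (hL4 : ∀ m m' m'' : M, min (D m m') (D m' m'') ≤ D m m'')
    (hdiag : ∀ m : M, D m m = (l : ℕ∞)) :
    let rel : Fin (l + 1) × M → Fin (l + 1) × M → Prop := fun p q =>
      p.1 = q.1 ∧ ((p.1 : ℕ) : ℕ∞) ≤ D p.2 q.2
    Equivalence rel ∧
    (SimpleGraph.fromRel (fun x y : Quot rel =>
      ∃ (k : Fin l) (m : M),
        x = Quot.mk rel (k.castSucc, m) ∧ y = Quot.mk rel (k.succ, m))).IsTree := by
  intro
  have hr := Chiswell.rel_equivalence D l hL1 hL4 hdiag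
  exact ⟨hr, Chiswell.graph_isTree hr⟩

/-- Chiswell construction: given a length function `D` on a monoid `M` with finite
maximum value `l`, the relation `(k, m) ∼ (k', m') ↔ k = k' ∧ D(m, m') ≥ k` on
`{0, …, l} × M` is an equivalence relation, and the simple graph on the quotient in
which two distinct classes are adjacent iff they are of the form `[k, m]`,
`[k+1, m]` is a tree. -/
theorem stmt_7 {M : Type*} [Monoid M] (D : M → M → ℕ∞) (l : ℕ)
    (hL1 : ∀ m m' : M, D m m' = D m' m)
    (hL2 : ∀ m m' m'' : M, D m' m'' ≤ D m m)
    (hL3 : ∀ m m' m'' : M, D m' m'' ≤ D (m' * m) (m'' * m))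
    (hL4 : ∀ m m' m'' : M, min (D m m') (D m' m'') ≤ D m m'')
    (hmax : ∀ m m' : M, D m m' ≤ (l : ℕ∞))
    (hdiag : ∀ m : M, D m m = (l : ℕ∞)) :
    let rel : Fin (l + 1) × M → Fin (l + 1) × M → Prop := fun p q =>
      p.1 = q.1 ∧ ((p.1 : ℕ) : ℕ∞) ≤ D p.2 q.2
    Equivalence rel ∧
    (SimpleGraph.fromRel (fun x y : Quot rel =>
      ∃ (k : Fin l) (m : M),
        x = Quot.mk rel (k.castSucc, m) ∧ y = Quot.mk rel (k.succ, m))).IsTree :=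
  stmt_7_general D l hL1 hL4 hdiag
end

section
/- Let (X_n)_{n∈ℕ} be a family of nonempty sets and P = Π_{n∈ℕ} X_n. A map f : P → P is sequential if whenever x, y ∈ P agree in all coordinates i < n, then f(x) and f(y) agree in all coordinates i < n. The sequential self-maps of P form a monoid Seq(P) under the operation (f · g)(x) = g(f(x)) (composition written as a right action). Define D : Seq(P) × Seq(P) → ℕ∞ by D(f, g) = sup{ n ∈ ℕ | for all x ∈ P and all i < n, f(x)_i = g(x)_i }. Then D is a strict length function on Seq(P): it satisfies (L1)–(L5). -/
/-- The sequential self-maps of `P = Π n, X n` form a monoid under the operation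
`(f · g)(x) = g(f(x))`, and `D(f, g) = sup { n | f x and g x agree in all
coordinates i < n, for every x }` is a strict length function on it
(axioms (L1)–(L5)). -/
theorem stmt_8 {X : ℕ → Type*} (hX : ∀ n, Nonempty (X n)) :
    let P := ∀ n, X n
    let Seq : (P → P) → Prop := fun f =>
      ∀ (n : ℕ) (x y : P), (∀ i < n, x i = y i) → ∀ i < n, f x i = f y i
    let mul : (P → P) → (P → P) → (P → P) := fun f g x => g (f x)
    let D : (P → P) → (P → P) → ℕ∞ := fun f g =>
      ⨆ (n : ℕ) (_ : ∀ (x : P), ∀ i < n, f x i = g x i), (n : ℕ∞)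
    Seq id ∧
    (∀ f g, Seq f → Seq g → Seq (mul f g)) ∧
    (∀ f g, Seq f → Seq g → D f g = D g f) ∧
    (∀ f f' f'', Seq f → Seq f' → Seq f'' → D f' f'' ≤ D f f) ∧
    (∀ f f' f'', Seq f → Seq f' → Seq f'' → D f' f'' ≤ D (mul f' f) (mul f'' f)) ∧
    (∀ f f' f'', Seq f → Seq f' → Seq f'' → min (D f f') (D f' f'') ≤ D f f'') ∧
    (∀ f f' f'', Seq f → Seq f' → Seq f'' → D f' f'' = D f f → f' = f'') := by
  intro P Seq mul D
  have hDchar : ∀ f g : P → P, ∀ n : ℕ,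
      (n : ℕ∞) ≤ D f g ↔ ∀ x : P, ∀ i < n, f x i = g x i := by
    intro f g n
    constructor
    · intro h x i hi
      by_contra hne
      have hb : D f g ≤ (i : ℕ∞) := by
        refine iSup_le fun m => iSup_le fun hm => ?_
        have hmi : m ≤ i := by
          by_contra hmi
          exact hne (hm x i (by omega))
        exact_mod_cast hmi
      have h2 : (n : ℕ∞) ≤ (i : ℕ∞) := h.trans hb
      have : n ≤ i := by exact_mod_cast h2
      omega
    · intro h
      exact le_iSup_of_le n (le_iSup_of_le h le_rfl)
  have hforall : ∀ c d : ℕ∞, (∀ n : ℕ, (n : ℕ∞) ≤ c → (n : ℕ∞) ≤ d) → c ≤ d := by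
    intro c d h
    cases c with
    | top =>
      cases d with
      | top => exact le_rfl
      | coe m =>
        have := h (m + 1) le_top
        have : (m : ℕ) + 1 ≤ m := by exact_mod_cast this
        omega
    | coe n => exact h n le_rfl
  have hDtop : ∀ f : P → P, D f f = ⊤ := by
    intro f
    rw [eq_top_iff]
    exact hforall ⊤ (D f f) fun n _ => (hDchar f f n).2 fun x i hi => rfl
  refine ⟨fun n x y h => h, fun f g hf hg n x y h i hi => hg n (f x) (f y) (hf n x y h) i hi,
    ?_, ?_, ?_, ?_, ?_⟩
  · intro f g hf hg
    apply le_antisymm <;>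
    · refine hforall _ _ fun n hn => ?_
      exact (hDchar _ _ n).2 fun x i hi => ((hDchar _ _ n).1 hn x i hi).symm
  · intro f f' f'' _ _ _
    rw [hDtop]
    exact le_top
  · intro f f' f'' hf hf' hf''
    refine hforall _ _ fun n hn => ?_
    exact (hDchar _ _ n).2 fun x i hi =>
      hf n (f' x) (f'' x) (fun j hj => (hDchar _ _ n).1 hn x j hj) i hi
  · intro f f' f'' hf hf' hf''
    refine hforall _ _ fun n hn => ?_
    rw [le_min_iff] at hn
    exact (hDchar _ _ n).2 fun x i hi =>
      ((hDchar _ _ n).1 hn.1 x i hi).trans ((hDchar _ _ n).1 hn.2 x i hi)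
  · intro f f' f'' hf hf' hf'' hD
    rw [hDtop] at hD
    funext x
    funext i
    exact (hDchar _ _ (i + 1)).1 (hD ▸ le_top) x i (by omega)
end

section
/- Let M be a semigroup and let N = M ∪ {I} be the monoid obtained from M by adjoining a new identity element I. Let f : N → ℕ satisfy f(I) = 0 and f(b) ≤ f(a·b·c) for all a, b, c ∈ N (f is ≤_J-preserving). Consider finite strict L-chains in N of the form σ = (m_k <_L ⋯ <_L m_1 <_L m_0 = I), k ≥ 0; two chains are equal iff they have the same length and the same terms. For chains σ = (m_k <_L ⋯ <_L m_0 = I) and τ = (m'_{k'} <_L ⋯ <_L m'_0 = I), let r = max{ i ≤ min(k, k') | m_j = m'_j for all j < i, and m_i L m'_i } (r is well defined since i = 0 qualifies) and set σ ∧_L τ = m_r, the maximum L-point of agreement. Define D(σ, τ) = f(σ ∧_L τ) ∈ ℕ∞ if σ ≠ τ, and D(σ, σ) = 1 + sup_{n ∈ N} f(n) ∈ ℕ∞. Then for all such chains σ, τ, ρ: (L1) D(σ, τ) = D(τ, σ); (L2) D(τ, ρ) ≤ D(σ, σ); (L4) D(σ, ρ) ≥ min(D(σ, τ), D(τ, ρ));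 and (L5) D(τ, ρ) = D(σ, σ) implies τ = ρ. -/
namespace Stmt9

variable {N : Type*} [Monoid N]

/-- `a ≤_L b`. -/
def lle (a b : N) : Prop := ∃ u, a = u * b

/-- `a L b`. -/
def lrel (a b : N) : Prop := lle a b ∧ lle b a

/-- `a <_L b`. -/
def llt (a b : N) : Prop := lle a b ∧ ¬ lle b a

/-- `IsLChain c` holds when `c = [m₀, m₁, …, m_k]` lists, from index `0` upwards,
the terms of a finite strict `L`-chain `m_k <_L ⋯ <_L m₁ <_L m₀ = 1`. -/
def IsLChain (c : List N) : Prop :=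
  c.head? = some 1 ∧ List.Chain' (fun a b => llt b a) c

/-- The index `r` of the maximum `L`-point of agreement of two chains:
the largest `i ≤ min(k, k')` such that `m_j = m'_j` for all `j < i` and
`m_i L m'_i`. -/
noncomputable def meetIdx (c c' : List N) : ℕ :=
  @Nat.findGreatest
    (fun i => i < c.length ∧ i < c'.length ∧
      (∀ j < i, c.getD j 1 = c'.getD j 1) ∧ lrel (c.getD i 1) (c'.getD i 1))
    (Classical.decPred _) (min c.length c'.length)

/-- The maximum `L`-point of agreement `σ ∧_L τ = m_r`. -/
noncomputable def wedge (c c' : List N) : N := c.getD (meetIdx c c') 1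

/-! Since `f` is `≤_L`-antitone it is constant on `L`-classes, which gives the symmetry (L1); it
takes finite values, all strictly below `D(σ, σ) = 1 + sup f`, which gives (L2) and (L5).
For (L4), if σ agrees with τ and τ with ρ up to an index `s`, then σ agrees with ρ up to `s`,
so `s = min (meetIdx σ τ) (meetIdx τ ρ) ≤ meetIdx σ ρ`. One of `σ ∧_L τ`, `τ ∧_L ρ` is
`L`-equivalent to `σ_s`, and `f` increases along the chain σ, so
`min (f (σ ∧_L τ)) (f (τ ∧_L ρ)) ≤ f σ_s ≤ f (σ ∧_L ρ)`. -/

theorem lle_refl (a : N) : lle a a := ⟨1, (one_mul a).symm⟩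

theorem lle.trans {a b c : N} (hab : lle a b) (hbc : lle b c) : lle a c := by
  obtain ⟨u, rfl⟩ := hab
  obtain ⟨v, rfl⟩ := hbc
  exact ⟨u * v, (mul_assoc u v c).symm⟩

theorem lrel_refl (a : N) : lrel a a := ⟨lle_refl a, lle_refl a⟩

theorem lrel.symm {a b : N} (h : lrel a b) : lrel b a := ⟨h.2, h.1⟩

theorem lrel.trans {a b c : N} (hab : lrel a b) (hbc : lrel b c) : lrel a c :=
  ⟨hab.1.trans hbc.1, hbc.2.trans hab.2⟩

section Monotone

variable {α : Type*} {f : N → α}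

theorem map_le_of_lle [Preorder α] (hf : ∀ u b, f b ≤ f (u * b)) {a b : N} (h : lle a b) :
    f b ≤ f a := by
  obtain ⟨u, rfl⟩ := h
  exact hf u b

theorem map_eq_of_lrel [PartialOrder α] (hf : ∀ u b, f b ≤ f (u * b)) {a b : N} (h : lrel a b) :
    f a = f b :=
  le_antisymm (map_le_of_lle hf h.2) (map_le_of_lle hf h.1)

end Monotone

theorem IsLChain.length_pos {c : List N} (hc : IsLChain c) : 0 < c.length := by
  cases c with
  | nil => simp [IsLChain] at hc
  | cons _ _ => simp

theorem IsLChain.getD_zero {c : List N} (hc : IsLChain c) : c.getD 0 1 = 1 := by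
  cases c with
  | nil => rfl
  | cons a t => simpa using hc.1

theorem IsLChain.getD_lle {l : List N} (hl : IsLChain l) {i j : ℕ} (hij : i ≤ j)
    (hj : j < l.length) : lle (l.getD j 1) (l.getD i 1) := by
  induction j, hij using Nat.le_induction with
  | base => exact lle_refl _
  | succ j hij ih =>
    have hj' : j < l.length := by omega
    have hstep : llt l[j + 1] l[j] := List.isChain_iff_getElem.mp hl.2 j hj
    have hprev := ih hj'
    rw [List.getD_eq_getElem _ _ hj'] at hprev
    rw [List.getD_eq_getElem _ _ hj]
    exact hstep.1.trans hprev

-- `meetIdx c c'` is the greatest `i ≤ min c.length c'.length` with `AgreesUpTo c c' i`.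
def AgreesUpTo (c c' : List N) (i : ℕ) : Prop :=
  i < c.length ∧ i < c'.length ∧
    (∀ j < i, c.getD j 1 = c'.getD j 1) ∧ lrel (c.getD i 1) (c'.getD i 1)

theorem AgreesUpTo.symm {c c' : List N} {i : ℕ} (h : AgreesUpTo c c' i) : AgreesUpTo c' c i :=
  ⟨h.2.1, h.1, fun j hj => (h.2.2.1 j hj).symm, h.2.2.2.symm⟩

theorem AgreesUpTo.mono {c c' : List N} {i k : ℕ} (h : AgreesUpTo c c' k) (hik : i ≤ k) :
    AgreesUpTo c c' i := by
  obtain ⟨hk, hk', heq, hrel⟩ := h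
  refine ⟨by omega, by omega, fun j hj => heq j (by omega), ?_⟩
  rcases hik.lt_or_eq with hik | rfl
  · rw [heq i hik]
    exact lrel_refl _
  · exact hrel

theorem AgreesUpTo.trans {c c' c'' : List N} {i : ℕ} (h : AgreesUpTo c c' i)
    (h' : AgreesUpTo c' c'' i) : AgreesUpTo c c'' i :=
  ⟨h.1, h'.2.1, fun j hj => (h.2.2.1 j hj).trans (h'.2.2.1 j hj), h.2.2.2.trans h'.2.2.2⟩

theorem agreesUpTo_zero {c c' : List N} (hc : IsLChain c) (hc' : IsLChain c') :
    AgreesUpTo c c' 0 := by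
  refine ⟨hc.length_pos, hc'.length_pos, fun _ h => absurd h (Nat.not_lt_zero _), ?_⟩
  rw [hc.getD_zero, hc'.getD_zero]
  exact lrel_refl 1

theorem agreesUpTo_meetIdx {c c' : List N} (hc : IsLChain c) (hc' : IsLChain c') :
    AgreesUpTo c c' (meetIdx c c') :=
  @Nat.findGreatest_spec _ _ (Classical.decPred _) _ (Nat.zero_le _) (agreesUpTo_zero hc hc')

theorem le_meetIdx {c c' : List N} {i : ℕ} (h : AgreesUpTo c c' i) : i ≤ meetIdx c c' :=
  @Nat.le_findGreatest _ _ (Classical.decPred _) _ (le_min h.1.le h.2.1.le) h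

theorem meetIdx_le_meetIdx_swap (c c' : List N) : meetIdx c c' ≤ meetIdx c' c :=
  @Nat.findGreatest_mono _ _ _ (Classical.decPred _) _ (Classical.decPred _)
    (fun _ => AgreesUpTo.symm) (min_comm _ _).le

theorem meetIdx_comm (c c' : List N) : meetIdx c c' = meetIdx c' c :=
  le_antisymm (meetIdx_le_meetIdx_swap c c') (meetIdx_le_meetIdx_swap c' c)

theorem lrel_wedge {c c' : List N} (hc : IsLChain c) (hc' : IsLChain c') :
    lrel (wedge c c') (wedge c' c) := by
  rw [wedge, wedge, meetIdx_comm c' c]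
  exact (agreesUpTo_meetIdx hc hc').2.2.2

theorem min_meetIdx_le {σ τ ρ : List N} (hσ : IsLChain σ) (hτ : IsLChain τ) (hρ : IsLChain ρ) :
    min (meetIdx σ τ) (meetIdx τ ρ) ≤ meetIdx σ ρ :=
  le_meetIdx (((agreesUpTo_meetIdx hσ hτ).mono (min_le_left _ _)).trans
    ((agreesUpTo_meetIdx hτ hρ).mono (min_le_right _ _)))

section Valuation

variable {α : Type*} {f : N → α}

theorem map_wedge_comm [PartialOrder α] (hf : ∀ u b, f b ≤ f (u * b)) {c c' : List N}
    (hc : IsLChain c) (hc' : IsLChain c') : f (wedge c c') = f (wedge c' c) :=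
  map_eq_of_lrel hf (lrel_wedge hc hc')

theorem min_map_wedge_le [LinearOrder α] (hf : ∀ u b, f b ≤ f (u * b)) {σ τ ρ : List N}
    (hσ : IsLChain σ) (hτ : IsLChain τ) (hρ : IsLChain ρ) :
    min (f (wedge σ τ)) (f (wedge τ ρ)) ≤ f (wedge σ ρ) := by
  have hστ := (agreesUpTo_meetIdx hσ hτ).mono (min_le_left _ (meetIdx τ ρ))
  have hmin : min (f (wedge σ τ)) (f (wedge τ ρ)) ≤
      f (σ.getD (min (meetIdx σ τ) (meetIdx τ ρ)) 1) := by
    rcases min_choice (meetIdx σ τ) (meetIdx τ ρ) with hs | hs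
    · exact min_le_of_left_le (by rw [wedge, hs])
    · refine min_le_of_right_le ?_
      rw [map_eq_of_lrel hf hστ.2.2.2, wedge, hs]
  exact hmin.trans (map_le_of_lle hf
    (hσ.getD_lle (min_meetIdx_le hσ hτ hρ) (agreesUpTo_meetIdx hσ hρ).1))

end Valuation

section ExtendDiag

variable {X α : Type*} {T : α} {g : X → X → α} {x y z : X}

open Classical in
noncomputable def extendDiag (T : α) (g : X → X → α) (x y : X) : α :=
  if x = y then T else g x y

theorem extendDiag_self : extendDiag T g x x = T := if_pos rfl

theorem extendDiag_of_ne (h : x ≠ y) : extendDiag T g x y = g x y := if_neg h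

theorem extendDiag_comm (h : g x y = g y x) : extendDiag T g x y = extendDiag T g y x := by
  by_cases hxy : x = y
  · rw [hxy]
  · rw [extendDiag_of_ne hxy, extendDiag_of_ne (Ne.symm hxy), h]

theorem extendDiag_le [Preorder α] (h : g x y ≤ T) : extendDiag T g x y ≤ T := by
  by_cases hxy : x = y
  · rw [hxy, extendDiag_self]
  · rwa [extendDiag_of_ne hxy]

theorem eq_of_extendDiag_eq [Preorder α] (h : g x y < T) (hT : extendDiag T g x y = T) :
    x = y := by
  by_contra hxy
  rw [extendDiag_of_ne hxy] at hT
  exact h.ne hT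

theorem min_extendDiag_le [LinearOrder α] (hle : g x y ≤ T)
    (hultra : min (g x y) (g y z) ≤ g x z) :
    min (extendDiag T g x y) (extendDiag T g y z) ≤ extendDiag T g x z := by
  by_cases hxz : x = z
  · rw [hxz, extendDiag_self]
    exact min_le_of_left_le (hxz ▸ extendDiag_le hle)
  by_cases hxy : x = y
  · rw [hxy, extendDiag_self]
    exact min_le_right _ _
  by_cases hyz : y = z
  · rw [hyz, extendDiag_self]
    exact min_le_left _ _
  rwa [extendDiag_of_ne hxy, extendDiag_of_ne hyz, extendDiag_of_ne hxz]

end ExtendDiag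

theorem natCast_lt_one_add_iSup {ι : Type*} (f : ι → ℕ) (i : ι) :
    (f i : ℕ∞) < 1 + ⨆ j, (f j : ℕ∞) :=
  calc (f i : ℕ∞) < 1 + f i := by norm_cast; omega
    _ ≤ 1 + ⨆ j, (f j : ℕ∞) := add_le_add_right (le_iSup (fun j => (f j : ℕ∞)) i) 1

end Stmt9

attribute [local instance] Classical.propDecidable

open Stmt9 in
theorem stmt_9_general {M : Type*} [Semigroup M] (f : WithOne M → ℕ)
    (hfJ : ∀ a b c : WithOne M, f b ≤ f (a * b * c)) :
    let D : List (WithOne M) → List (WithOne M) → ℕ∞ := fun σ τ =>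
      if σ = τ then 1 + ⨆ n : WithOne M, (f n : ℕ∞) else (f (wedge σ τ) : ℕ∞)
    ∀ σ τ ρ : List (WithOne M), IsLChain σ → IsLChain τ → IsLChain ρ →
      D σ τ = D τ σ ∧
      D τ ρ ≤ D σ σ ∧
      min (D σ τ) (D τ ρ) ≤ D σ ρ ∧
      (D τ ρ = D σ σ → τ = ρ) := by
  intro D σ τ ρ hσ hτ hρ
  have hD : D = extendDiag (1 + ⨆ n, (f n : ℕ∞)) fun σ τ => (f (wedge σ τ) : ℕ∞) := by
    funext σ τ
    simp only [D, extendDiag]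
  have hf : ∀ u b : WithOne M, (f b : ℕ∞) ≤ f (u * b) := fun u b => by
    exact_mod_cast (mul_one (u * b)) ▸ hfJ u b 1
  have hlt : ∀ σ τ : List (WithOne M), (f (wedge σ τ) : ℕ∞) < 1 + ⨆ n, (f n : ℕ∞) :=
    fun _ _ => natCast_lt_one_add_iSup f _
  rw [hD, extendDiag_self]
  exact ⟨extendDiag_comm (map_wedge_comm hf hσ hτ), extendDiag_le (hlt τ ρ).le,
    min_extendDiag_le (hlt σ τ).le (min_map_wedge_le hf hσ hτ hρ),
    eq_of_extendDiag_eq (hlt τ ρ)⟩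

open Stmt9 in
/-- Product-free part of the Holonomy Theorem: for a `≤_J`-preserving
`f : M ∪ {I} → ℕ`, the function `D` on strict `L`-chains defined from `f` and the
maximum `L`-point of agreement satisfies axioms (L1), (L2), (L4) and (L5). -/
theorem stmt_9 {M : Type*} [Semigroup M] (f : WithOne M → ℕ)
    (hfI : f 1 = 0)
    (hfJ : ∀ a b c : WithOne M, f b ≤ f (a * b * c)) :
    let D : List (WithOne M) → List (WithOne M) → ℕ∞ := fun σ τ =>
      if σ = τ then 1 + ⨆ n : WithOne M, (f n : ℕ∞) else (f (wedge σ τ) : ℕ∞)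
    ∀ σ τ ρ : List (WithOne M), IsLChain σ → IsLChain τ → IsLChain ρ →
      D σ τ = D τ σ ∧
      D τ ρ ≤ D σ σ ∧
      min (D σ τ) (D τ ρ) ≤ D σ ρ ∧
      (D τ ρ = D σ σ → τ = ρ) :=
  stmt_9_general f hfJ
end

section
/- Let (P, ≤) be an upper finite partially ordered set with a maximum element I, i.e. {q ∈ P | p ≤ q} is finite for every p ∈ P. A weight function is a map w : P → ℕ with w(I) = 0; for a weight function w define h_w : P → ℕ by h_w(p) = max{ Σ_{i=0}^n w(p_i) | p = p_n < ⋯ < p_1 < p_0 = I is a strictly increasing chain in P } (well defined by upper finiteness). Then the correspondence w ↦ h_w is a bijection from the set of all weight functions w : P → ℕ onto the set of all order-reversing maps h : P → ℕ with h(I) = 0 (h order-reversing means p ≤ q implies h(q) ≤ h(p)). -/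
/-!
Every chain from `p` up to `I` starts with a step `p < q`, so the chain maximum satisfies the
recursion `h_w p = w p + max {h_w q | p < q}` for `p ≠ I`, and `h_w I = w I`. Hence `w` is
recovered from `h_w` by `w p = h_w p - max {h_w q | p < q}`. Conversely, for antitone `h` with
`h I = 0` the same formula defines a weight whose chain maximum is `h`; this is checked by
well-founded induction on `>`, which is well founded because the sets `Ici p` are finite.
-/

namespace Dedekind

variable {P : Type*} [PartialOrder P] {I p q : P} {w : P → ℕ} {s : ℕ}

lemma wellFoundedGT_of_finite_Ici (hupper : ∀ p : P, (Set.Ici p).Finite) : WellFoundedGT P :=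
  ⟨Subrelation.wf (fun {_ _} h => Set.ncard_lt_ncard (Set.Ici_ssubset_Ici.2 h) (hupper _))
    (measure fun p : P => (Set.Ici p).ncard).wf⟩

def chainWeights (I : P) (w : P → ℕ) (p : P) : Set ℕ :=
  { s : ℕ | ∃ c : List P, c.IsChain (· < ·) ∧ c.head? = some p ∧
      c.getLast? = some I ∧ s = (c.map w).sum }

noncomputable def chainMax (I : P) (w : P → ℕ) (p : P) : ℕ :=
  sSup (chainWeights I w p)

open Classical in
noncomputable def weightOf (I : P) (h : P → ℕ) (p : P) : ℕ :=
  if p = I then 0 else h p - sSup (h '' Set.Ioi p)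

lemma weightOf_self (h : P → ℕ) : weightOf I h I = 0 :=
  if_pos rfl

lemma chainWeights_nonempty (hI : ∀ p : P, p ≤ I) (w : P → ℕ) (p : P) :
    (chainWeights I w p).Nonempty := by
  rcases (hI p).eq_or_lt with rfl | hlt
  · exact ⟨w p, [p], by simp, rfl, rfl, by simp⟩
  · exact ⟨w p + w I, [p, I], by simpa using hlt, rfl, rfl, by simp⟩

lemma chainWeights_bddAbove (hupper : (Set.Ici p).Finite) (I : P) (w : P → ℕ) :
    BddAbove (chainWeights I w p) := by
  classical
  refine ⟨∑ q ∈ hupper.toFinset, w q, ?_⟩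
  rintro s ⟨c, hc, hhead, -, rfl⟩
  obtain ⟨t, rfl⟩ : ∃ t, c = p :: t := List.head?_eq_some_iff.1 hhead
  have hpair := List.isChain_iff_pairwise.1 hc
  rw [← List.sum_toFinset _ hpair.nodup]
  refine Finset.sum_le_sum_of_subset fun q hq => hupper.mem_toFinset.2 ?_
  rcases List.mem_cons.1 (List.mem_toFinset.1 hq) with rfl | hq
  · exact le_rfl
  · exact ((List.pairwise_cons.1 hpair).1 q hq).le

lemma chainWeights_self (hI : ∀ p : P, p ≤ I) (w : P → ℕ) : chainWeights I w I = {w I} := by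
  ext s
  constructor
  · rintro ⟨c, hc, hhead, -, rfl⟩
    obtain ⟨t, rfl⟩ : ∃ t, c = I :: t := List.head?_eq_some_iff.1 hhead
    cases t with
    | nil => simp
    | cons b t => exact absurd ((List.isChain_cons_cons.1 hc).1.trans_le (hI b)) (lt_irrefl I)
  · rintro rfl
    exact ⟨[I], by simp, rfl, rfl, by simp⟩

lemma add_mem_chainWeights (hpq : p < q) (hs : s ∈ chainWeights I w q) :
    w p + s ∈ chainWeights I w p := by
  obtain ⟨c, hc, hhead, hlast, rfl⟩ := hs
  obtain ⟨t, rfl⟩ : ∃ t, c = q :: t := List.head?_eq_some_iff.1 hhead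
  exact ⟨p :: q :: t, List.isChain_cons_cons.2 ⟨hpq, hc⟩, rfl,
    by rwa [List.getLast?_cons_cons], by simp⟩

lemma exists_lt_of_mem_chainWeights (hp : p ≠ I) (hs : s ∈ chainWeights I w p) :
    ∃ q, p < q ∧ ∃ s' ∈ chainWeights I w q, s = w p + s' := by
  obtain ⟨c, hc, hhead, hlast, rfl⟩ := hs
  obtain ⟨t, rfl⟩ : ∃ t, c = p :: t := List.head?_eq_some_iff.1 hhead
  cases t with
  | nil => exact absurd (Option.some.inj hlast) hp
  | cons q t =>
    refine ⟨q, (List.isChain_cons_cons.1 hc).1, _,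
      ⟨q :: t, (List.isChain_cons_cons.1 hc).2, rfl, ?_, rfl⟩, by simp⟩
    rwa [List.getLast?_cons_cons] at hlast

lemma chainMax_mem (hI : ∀ p : P, p ≤ I) (hupper : ∀ p : P, (Set.Ici p).Finite)
    (w : P → ℕ) (p : P) : chainMax I w p ∈ chainWeights I w p :=
  Nat.sSup_mem (chainWeights_nonempty hI w p) (chainWeights_bddAbove (hupper p) I w)

lemma chainMax_self (hI : ∀ p : P, p ≤ I) (w : P → ℕ) : chainMax I w I = w I := by
  rw [chainMax, chainWeights_self hI, csSup_singleton]

lemma chainMax_antitone (hI : ∀ p : P, p ≤ I) (hupper : ∀ p : P, (Set.Ici p).Finite)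
    (w : P → ℕ) : Antitone (chainMax I w) := by
  intro p q hpq
  rcases hpq.eq_or_lt with rfl | hlt
  · exact le_rfl
  · calc chainMax I w q ≤ w p + chainMax I w q := Nat.le_add_left _ _
      _ ≤ chainMax I w p := le_csSup (chainWeights_bddAbove (hupper p) I w)
          (add_mem_chainWeights hlt (chainMax_mem hI hupper w q))

lemma chainMax_eq_add (hI : ∀ p : P, p ≤ I) (hupper : ∀ p : P, (Set.Ici p).Finite)
    (w : P → ℕ) (hp : p ≠ I) :
    chainMax I w p = w p + sSup (chainMax I w '' Set.Ioi p) := by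
  have hne : (chainMax I w '' Set.Ioi p).Nonempty := ⟨_, I, (hI p).lt_of_ne hp, rfl⟩
  have hbdd : BddAbove (chainMax I w '' Set.Ioi p) :=
    (((hupper p).subset Set.Ioi_subset_Ici_self).image _).bddAbove
  apply le_antisymm
  · refine csSup_le (chainWeights_nonempty hI w p) ?_
    rintro s hs
    obtain ⟨q, hpq, s', hs', rfl⟩ := exists_lt_of_mem_chainWeights hp hs
    calc w p + s' ≤ w p + chainMax I w q :=
          Nat.add_le_add_left (le_csSup (chainWeights_bddAbove (hupper q) I w) hs') _
      _ ≤ w p + sSup (chainMax I w '' Set.Ioi p) :=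
          Nat.add_le_add_left (le_csSup hbdd ⟨q, hpq, rfl⟩) _
  · obtain ⟨q, hpq, hq⟩ := Nat.sSup_mem hne hbdd
    rw [← hq]
    exact le_csSup (chainWeights_bddAbove (hupper p) I w)
      (add_mem_chainWeights hpq (chainMax_mem hI hupper w q))

lemma weightOf_chainMax (hI : ∀ p : P, p ≤ I) (hupper : ∀ p : P, (Set.Ici p).Finite)
    (hw : w I = 0) : weightOf I (chainMax I w) = w := by
  funext p
  by_cases hp : p = I
  · rw [hp, weightOf_self, hw]
  · rw [weightOf, if_neg hp, chainMax_eq_add hI hupper w hp, Nat.add_sub_cancel]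

lemma chainMax_weightOf (hI : ∀ p : P, p ≤ I) (hupper : ∀ p : P, (Set.Ici p).Finite)
    {h : P → ℕ} (hanti : Antitone h) (h0 : h I = 0) :
    chainMax I (weightOf I h) = h := by
  have := wellFoundedGT_of_finite_Ici hupper
  funext p
  induction p using WellFoundedGT.induction with
  | _ p ih =>
    by_cases hp : p = I
    · rw [hp, chainMax_self hI, weightOf_self, h0]
    · have hle : sSup (h '' Set.Ioi p) ≤ h p :=
        csSup_le ⟨h I, I, (hI p).lt_of_ne hp, rfl⟩ fun _ ⟨_, hq, hhq⟩ => hhq ▸ hanti hq.le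
      rw [chainMax_eq_add hI hupper _ hp, Set.image_congr (s := Set.Ioi p) ih, weightOf,
        if_neg hp, Nat.sub_add_cancel hle]

end Dedekind

/-- Dedekind inversion: on an upper finite partially ordered set `P` with maximum
`I`, the map sending a weight function `w` (a map `P → ℕ` with `w I = 0`) to
`h_w(p) = max { Σ w(p_i) | p = p_n < ⋯ < p_1 < p_0 = I a chain in P }` is a
bijection onto the set of order-reversing maps `h : P → ℕ` with `h I = 0`. -/
theorem stmt_10 {P : Type*} [PartialOrder P] (I : P) (hI : ∀ p : P, p ≤ I)
    (hupper : ∀ p : P, {q : P | p ≤ q}.Finite) :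
    Set.BijOn
      (fun (w : P → ℕ) (p : P) =>
        sSup { s : ℕ | ∃ c : List P, c.Chain' (· < ·) ∧ c.head? = some p ∧
          c.getLast? = some I ∧ s = (c.map w).sum })
      {w : P → ℕ | w I = 0}
      {h : P → ℕ | Antitone h ∧ h I = 0} :=
  Set.InvOn.bijOn (f' := Dedekind.weightOf I)
    ⟨fun _ hw => Dedekind.weightOf_chainMax hI hupper hw,
      fun _ ⟨hanti, h0⟩ => Dedekind.chainMax_weightOf hI hupper hanti h0⟩
    (fun w hw =>
      ⟨Dedekind.chainMax_antitone hI hupper w, (Dedekind.chainMax_self hI w).trans hw⟩)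
    fun h _ => Dedekind.weightOf_self h
end

section
/- Let M be a semigroup, let N = M ∪ {I} be the monoid obtained by adjoining a new identity element I, and assume N is finite J-above. Then for a map f : N → ℕ the following are equivalent: (a) f(I) = 0 and f(b) ≤ f(a·b·c) for all a, b, c ∈ N (f is ≤_J-preserving); (b) there exists a map w : N → ℕ with w(I) = 0 which is constant on J-classes (a J b implies w(a) = w(b)), such that for every m ∈ N, f(m) = max{ Σ_{i=0}^n w(m_i) | m = m_n <_J ⋯ <_J m_1 <_J m_0 = I is a chain in N }. -/
namespace Stmt11

variable {N : Type*} [Monoid N]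

/-- `a ≤_J b`. -/
def jle (a b : N) : Prop := ∃ u v, a = u * b * v

/-- `a J b`. -/
def jrel (a b : N) : Prop := jle a b ∧ jle b a

/-- `a <_J b`. -/
def jlt (a b : N) : Prop := jle a b ∧ ¬ jle b a

end Stmt11

/-!
Call `w m := f m - max {f x | m <_J x}` the jump of `f` at `m`. Along any strict chain
`m <_J x <_J ⋯ <_J 1` the jumps telescope to at most `f m`, and following greedily a strictly
`J`-above element of largest `f`-value gives a chain on which they telescope to exactly `f m`;
finiteness `J`-above makes the maximum exist and the greedy walk terminate. Conversely, a chain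
from `b` down to `1` can be restarted at any `m ≤_J b`, either by prepending `m` or, when
`m J b`, by replacing `b` with `m`; so the maximal chain weight is `≤_J`-antitone.
-/

namespace Stmt11

variable {N : Type*} [Monoid N]

variable {a b c m x : N}

theorem jle_refl (a : N) : jle a a := ⟨1, 1, by simp⟩

theorem jle_trans (hab : jle a b) (hbc : jle b c) : jle a c := by
  obtain ⟨u, v, rfl⟩ := hab
  obtain ⟨u', v', rfl⟩ := hbc
  exact ⟨u * u', v' * v, by simp only [mul_assoc]⟩

theorem jle_one (a : N) : jle a 1 := ⟨a, 1, by simp⟩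

theorem jlt_of_jle_of_jlt (hab : jle a b) (hbc : jlt b c) : jlt a c :=
  ⟨jle_trans hab hbc.1, fun hca => hbc.2 (jle_trans hca hab)⟩

theorem jlt_irrefl (a : N) : ¬ jlt a a := fun h => h.2 h.1

theorem not_one_jlt (a : N) : ¬ jlt 1 a := fun h => h.2 (jle_one a)

theorem jlt_iff_of_jrel (hab : jrel a b) : jlt a x ↔ jlt b x :=
  ⟨jlt_of_jle_of_jlt hab.2, jlt_of_jle_of_jlt hab.1⟩

theorem withOne_eq_one_of_one_jle {M : Type*} [Semigroup M] {a : WithOne M}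
    (h : jle 1 a) : a = 1 := by
  obtain ⟨u, v, h⟩ := h
  induction a using WithOne.recOneCoe with
  | one => rfl
  | coe a =>
    induction u using WithOne.recOneCoe <;> induction v using WithOne.recOneCoe <;>
      simp_all [← WithOne.coe_mul]

theorem forall_mul_mul_le_iff (f : N → ℕ) :
    (∀ a b c : N, f b ≤ f (a * b * c)) ↔ ∀ a b : N, jle a b → f b ≤ f a :=
  ⟨fun hf _ b ⟨u, v, h⟩ => h ▸ hf u b v, fun hf a b c => hf _ b ⟨a, c, rfl⟩⟩

/-- `JChain m c`: the list `c` is a chain `m = m_n <_J ⋯ <_J m_0 = 1`. -/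
inductive JChain : N → List N → Prop
  | one : JChain 1 [1]
  | cons {m x : N} {c : List N} : jlt m x → JChain x c → JChain m (m :: c)

theorem jChain_iff {c : List N} :
    JChain m c ↔ c.IsChain jlt ∧ c.head? = some m ∧ c.getLast? = some 1 := by
  constructor
  · intro hc
    induction hc with
    | one => simp
    | @cons m x c hmx _ ih =>
      obtain ⟨hchain, hhead, hlast⟩ := ih
      obtain ⟨c, rfl⟩ : ∃ c', c = x :: c' := by
        cases c <;> simp_all
      exact ⟨hchain.cons_cons hmx, rfl, by simpa [List.getLast?_cons_cons] using hlast⟩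
  · induction c generalizing m with
    | nil => simp
    | cons y c ih =>
      rintro ⟨hchain, hhead, hlast⟩
      obtain rfl : y = m := by simpa using hhead
      cases c with
      | nil =>
        obtain rfl : y = 1 := by simpa using hlast
        exact .one
      | cons x c =>
        rw [List.isChain_cons_cons] at hchain
        refine .cons hchain.1 (ih ⟨hchain.2, rfl, ?_⟩)
        simpa [List.getLast?_cons_cons] using hlast

theorem JChain.jle_of_mem {c : List N} (hc : JChain m c) (hx : x ∈ c) : jle m x := by
  induction hc with
  | one => simp_all [jle_refl]
  | cons hmx _ ih =>
    rcases List.mem_cons.mp hx with rfl | hx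
    · exact jle_refl x
    · exact jle_trans hmx.1 (ih hx)

theorem JChain.nodup {c : List N} (hc : JChain m c) : c.Nodup := by
  induction hc with
  | one => simp
  | cons hmx hc ih =>
    exact List.nodup_cons.mpr
      ⟨fun hm => jlt_irrefl _ (jlt_of_jle_of_jlt (hc.jle_of_mem hm) hmx), ih⟩

theorem JChain.eq_of_one {c : List N} (hc : JChain 1 c) : c = [1] := by
  cases hc with
  | one => rfl
  | cons h _ => exact absurd h (not_one_jlt _)

def chainSums (w : N → ℕ) (m : N) : Set ℕ :=
  {s | ∃ c, JChain m c ∧ s = (c.map w).sum}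

set_option linter.deprecated false in
theorem setOf_chain'_eq_chainSums (w : N → ℕ) (m : N) :
    {s : ℕ | ∃ c : List N, c.Chain' jlt ∧ c.head? = some m ∧ c.getLast? = some 1 ∧
      s = (c.map w).sum} = chainSums w m := by
  ext s
  simp only [chainSums, jChain_iff, Set.mem_ofPred_eq, and_assoc]
  rfl

theorem chainSums_one {w : N → ℕ} (hw1 : w 1 = 0) : chainSums w 1 = {0} := by
  ext s
  constructor
  · rintro ⟨c, hc, rfl⟩
    simp [hc.eq_of_one, hw1]
  · rintro rfl
    exact ⟨[1], .one, by simp [hw1]⟩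

theorem JChain.exists_sum_le_of_jle (h1 : ∀ a : N, jle 1 a → a = 1) {w : N → ℕ}
    (hw : ∀ a b : N, jrel a b → w a = w b) {c : List N} (hc : JChain b c) (hmb : jle m b) :
    ∃ c', JChain m c' ∧ (c.map w).sum ≤ (c'.map w).sum := by
  by_cases hbm : jle b m
  · have hwm : w m = w b := hw m b ⟨hmb, hbm⟩
    cases hc with
    | one =>
      obtain rfl := h1 m hbm
      exact ⟨[1], .one, le_rfl⟩
    | cons hbx hc =>
      exact ⟨m :: _, .cons (jlt_of_jle_of_jlt hmb hbx) hc, by simp [hwm]⟩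
  · exact ⟨m :: c, .cons ⟨hmb, hbm⟩ hc, by simp⟩

section FiniteJAbove

variable (hfin : ∀ a : N, {b : N | jle a b}.Finite)
include hfin

theorem chainSums_bddAbove (w : N → ℕ) (m : N) : BddAbove (chainSums w m) := by
  classical
  refine ⟨∑ x ∈ (hfin m).toFinset, w x, ?_⟩
  rintro s ⟨c, hc, rfl⟩
  calc (c.map w).sum = ∑ x ∈ c.toFinset, w x := (List.sum_toFinset w hc.nodup).symm
    _ ≤ ∑ x ∈ (hfin m).toFinset, w x :=
      Finset.sum_le_sum_of_subset fun x hx => by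
        simpa using hc.jle_of_mem (List.mem_toFinset.mp hx)

theorem sSup_chainSums_le_of_jle (h1 : ∀ a : N, jle 1 a → a = 1) {w : N → ℕ}
    (hw : ∀ a b : N, jrel a b → w a = w b) (hmb : jle m b) :
    sSup (chainSums w b) ≤ sSup (chainSums w m) := by
  rcases (chainSums w b).eq_empty_or_nonempty with hempty | hne
  · simp [hempty]
  refine csSup_le hne ?_
  rintro s ⟨c, hc, rfl⟩
  obtain ⟨c', hc', hle⟩ := hc.exists_sum_le_of_jle h1 hw hmb
  exact hle.trans (le_csSup (chainSums_bddAbove hfin w m) ⟨c', hc', rfl⟩)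

theorem wellFounded_flip_jlt : WellFounded (flip (jlt : N → N → Prop)) := by
  refine Subrelation.wf (fun {x m} (hmx : jlt m x) => ?_)
    (measure fun a => (hfin a).toFinset.card).wf
  refine Finset.card_lt_card ⟨fun y hy => ?_, fun hsub => hmx.2 ?_⟩
  · simp only [Set.Finite.mem_toFinset, Set.mem_ofPred_eq] at hy ⊢
    exact jle_trans hmx.1 hy
  · simpa using hsub (by simpa using jle_refl m)

noncomputable def strictUpper (m : N) : Finset N :=
  ((hfin m).subset fun _ (hx : jlt m _) => hx.1).toFinset

theorem mem_strictUpper : x ∈ strictUpper hfin m ↔ jlt m x := Set.Finite.mem_toFinset _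

noncomputable def jump (f : N → ℕ) (m : N) : ℕ := f m - (strictUpper hfin m).sup f

variable {f : N → ℕ} (hf : ∀ a b : N, jle a b → f b ≤ f a)
include hf

theorem jump_add_sup (m : N) : jump hfin f m + (strictUpper hfin m).sup f = f m :=
  Nat.sub_add_cancel <| Finset.sup_le fun x hx => hf m x ((mem_strictUpper hfin).mp hx).1

theorem jump_eq_of_jrel (hab : jrel a b) : jump hfin f a = jump hfin f b := by
  have hfab : f a = f b := le_antisymm (hf b a hab.2) (hf a b hab.1)
  have hupper : strictUpper hfin a = strictUpper hfin b := by
    ext x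
    simp only [mem_strictUpper, jlt_iff_of_jrel hab]
  simp only [jump, hfab, hupper]

theorem JChain.sum_jump_le {c : List N} (hc : JChain m c) :
    (c.map (jump hfin f)).sum ≤ f m := by
  induction hc with
  | one =>
    simp only [List.map_cons, List.map_nil, List.sum_cons, List.sum_nil, add_zero]
    exact Nat.sub_le _ _
  | @cons m x c hmx _ ih =>
    have hx : f x ≤ (strictUpper hfin m).sup f := Finset.le_sup ((mem_strictUpper hfin).mpr hmx)
    have := jump_add_sup hfin hf m
    simp only [List.map_cons, List.sum_cons]
    omega

theorem exists_jChain_sum_jump_eq (h1 : ∀ a : N, jle 1 a → a = 1) (hf1 : f 1 = 0) (m : N) :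
    ∃ c, JChain m c ∧ (c.map (jump hfin f)).sum = f m := by
  induction m using (wellFounded_flip_jlt hfin).induction with
  | _ m ih =>
  by_cases hm1 : m = 1
  · subst hm1
    exact ⟨[1], .one, by simpa [hf1] using JChain.one.sum_jump_le hfin hf⟩
  have hone : (1 : N) ∈ strictUpper hfin m :=
    (mem_strictUpper hfin).mpr ⟨jle_one m, fun h => hm1 (h1 m h)⟩
  obtain ⟨x, hx, hsup⟩ := Finset.exists_mem_eq_sup _ ⟨1, hone⟩ f
  have hmx := (mem_strictUpper hfin).mp hx
  obtain ⟨c, hc, hsum⟩ := ih x hmx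
  refine ⟨m :: c, .cons hmx hc, ?_⟩
  rw [List.map_cons, List.sum_cons, hsum, ← hsup, jump_add_sup hfin hf]

theorem sSup_chainSums_jump (h1 : ∀ a : N, jle 1 a → a = 1) (hf1 : f 1 = 0) (m : N) :
    sSup (chainSums (jump hfin f) m) = f m := by
  obtain ⟨c, hc, hsum⟩ := exists_jChain_sum_jump_eq hfin hf h1 hf1 m
  refine IsGreatest.csSup_eq ⟨⟨c, hc, hsum.symm⟩, ?_⟩
  rintro s ⟨c', hc', rfl⟩
  exact hc'.sum_jump_le hfin hf

end FiniteJAbove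

theorem jle_antitone_iff_exists_weight (hfin : ∀ a : N, {b : N | jle a b}.Finite)
    (h1 : ∀ a : N, jle 1 a → a = 1) (f : N → ℕ) :
    (f 1 = 0 ∧ ∀ a b : N, jle a b → f b ≤ f a) ↔
    ∃ w : N → ℕ, w 1 = 0 ∧ (∀ a b : N, jrel a b → w a = w b) ∧
      ∀ m, f m = sSup (chainSums w m) := by
  constructor
  · rintro ⟨hf1, hf⟩
    refine ⟨jump hfin f, ?_, fun a b => jump_eq_of_jrel hfin hf,
      fun m => (sSup_chainSums_jump hfin hf h1 hf1 m).symm⟩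
    simpa [hf1] using JChain.one.sum_jump_le hfin hf
  · rintro ⟨w, hw1, hw, hf⟩
    refine ⟨by simp [hf, chainSums_one hw1], fun a b hab => ?_⟩
    rw [hf a, hf b]
    exact sSup_chainSums_le_of_jle hfin h1 hw hab

end Stmt11

open Stmt11 in
/-- For a finite `J`-above monoid `N = M ∪ {I}`, a map `f : N → ℕ` is
`≤_J`-preserving iff it is of the form `f(m) = max { Σ w(m_i) | m = m_n <_J ⋯ <_J
m_0 = I }` for some weight `w` on the `J`-classes. -/
theorem stmt_11 {M : Type*} [Semigroup M]
    (hfin : ∀ a : WithOne M, {b : WithOne M | jle a b}.Finite)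
    (f : WithOne M → ℕ) :
    (f 1 = 0 ∧ ∀ a b c : WithOne M, f b ≤ f (a * b * c)) ↔
    (∃ w : WithOne M → ℕ, w 1 = 0 ∧
      (∀ a b : WithOne M, jrel a b → w a = w b) ∧
      ∀ m : WithOne M, f m =
        sSup { s : ℕ | ∃ c : List (WithOne M), c.Chain' jlt ∧ c.head? = some m ∧
          c.getLast? = some 1 ∧ s = (c.map w).sum }) := by
  simp only [setOf_chain'_eq_chainSums, forall_mul_mul_le_iff]
  exact jle_antitone_iff_exists_weight hfin (fun _ => withOne_eq_one_of_one_jle) f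
end

section
/- Let M be a stable monoid and let a, b, c ∈ M satisfy a <_L b and b R b·c. Then a R a·c and a·c <_L b·c. -/
namespace GreenDefs

variable {M : Type*} [Monoid M]

/-- `a ≤_L b`. -/
def lle (a b : M) : Prop := ∃ u, a = u * b

/-- `a L b`. -/
def lrel (a b : M) : Prop := lle a b ∧ lle b a

/-- `a <_L b`. -/
def llt (a b : M) : Prop := lle a b ∧ ¬ lle b a

/-- `a ≤_R b`. -/
def rle (a b : M) : Prop := ∃ u, a = b * u

/-- `a R b`. -/
def rrel (a b : M) : Prop := rle a b ∧ rle b a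

/-- `a ≤_J b`. -/
def jle (a b : M) : Prop := ∃ u v, a = u * b * v

/-- `a J b`. -/
def jrel (a b : M) : Prop := jle a b ∧ jle b a

/-- `a <_J b`. -/
def jlt (a b : M) : Prop := jle a b ∧ ¬ jle b a

/-- `a H b`. -/
def hrel (a b : M) : Prop := lrel a b ∧ rrel a b

/-- A monoid is stable if `a·x J a` implies `a·x R a` and `x·a J a` implies
`x·a L a`. -/
def Stable (M : Type*) [Monoid M] : Prop :=
  ∀ a x : M, (jrel (a * x) a → rrel (a * x) a) ∧ (jrel (x * a) a → lrel (x * a) a)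

end GreenDefs

open GreenDefs in
/-- In a stable monoid, if `a <_L b` and `b R b·c`, then `a R a·c` and
`a·c <_L b·c`. -/
theorem stmt_12 {M : Type*} [Monoid M] (hM : Stable M)
    (a b c : M) (hab : llt a b) (hbc : rrel b (b * c)) :
    rrel a (a * c) ∧ llt (a * c) (b * c) := by
  obtain ⟨⟨u, hu⟩, hnba⟩ := hab
  obtain ⟨⟨v, hv⟩, -⟩ := hbc
  have hac : a * c = u * (b * c) := by rw [hu, mul_assoc]
  have haR : rrel a (a * c) := by
    refine ⟨⟨v, ?_⟩, ⟨c, rfl⟩⟩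
    rw [hac, mul_assoc, ← hv]
    exact hu
  refine ⟨haR, ⟨u, hac⟩, ?_⟩
  rintro ⟨w, hw⟩
  apply hnba
  have hjba : jle b a := ⟨w, c * v, by
    calc b = b * c * v := hv
    _ = w * (a * c) * v := by rw [hw]
    _ = w * a * (c * v) := by simp only [mul_assoc]⟩
  have hjab : jle a b := ⟨u, 1, by rw [mul_one, hu]⟩
  have := (hM b u).2 ⟨⟨u, 1, by rw [mul_one]⟩, by rw [← hu]; exact hjba⟩
  rw [← hu] at this
  exact this.2
end

section
/- Let M be a stable monoid and let s, h : M → M be maps such that for all m, m' ∈ M: (a) m·s(m) R m; (b) m·s(m)·h(m) = m; and (c) m R m' implies m·s(m) = m'·s(m'). Let (m_k <_L ⋯ <_L m_1 <_L m_0 = 1) be a strict L-chain in M and set x_0 = 1 and x_i = m_i·s(m_{i−1}) for 1 ≤ i ≤ k. Then for all 1 ≤ i ≤ k: (i) x_i R m_i (and x_0 R m_0); (ii) x_i <_L x_{i−1}·s(x_{i−1}); (iii) x_i <_J x_{i−1}; and (iv) m_i = x_i·h(m_{i−1}). -/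
open GreenDefs in
/-- Properties of the Zeiger encoding of a strict `L`-chain
`m_k <_L ⋯ <_L m_1 <_L m_0 = 1` in a stable monoid, where `s m = m^*` and
`h m = m^#` satisfy `m·s(m) R m`, `m·s(m)·h(m) = m`, and `m R m'` implies
`m·s(m) = m'·s(m')`, and `x_0 = 1`, `x_i = m_i·s(m_{i-1})`. -/
theorem stmt_13 {M : Type*} [Monoid M] (hM : Stable M)
    (s h : M → M)
    (hs : ∀ m : M, rrel (m * s m) m)
    (hsh : ∀ m : M, m * s m * h m = m)
    (hR : ∀ m m' : M, rrel m m' → m * s m = m' * s m')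
    (k : ℕ) (m : ℕ → M) (hm0 : m 0 = 1)
    (hchain : ∀ i, 1 ≤ i → i ≤ k → llt (m i) (m (i - 1)))
    (x : ℕ → M) (hx0 : x 0 = 1)
    (hx : ∀ i, 1 ≤ i → i ≤ k → x i = m i * s (m (i - 1))) :
    rrel (x 0) (m 0) ∧
    ∀ i, 1 ≤ i → i ≤ k →
      rrel (x i) (m i) ∧
      llt (x i) (x (i - 1) * s (x (i - 1))) ∧
      jlt (x i) (x (i - 1)) ∧
      m i = x i * h (m (i - 1)) := by
  have rle_jle : ∀ a b : M, rle a b → jle a b := by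
    rintro a b ⟨u, rfl⟩; exact ⟨1, u, by simp⟩
  have lle_jle : ∀ a b : M, lle a b → jle a b := by
    rintro a b ⟨u, rfl⟩; exact ⟨u, 1, by simp⟩
  have jle_trans : ∀ a b c : M, jle a b → jle b c → jle a c := by
    rintro a b c ⟨u, v, rfl⟩ ⟨p, q, rfl⟩
    exact ⟨u * p, q * v, by simp [mul_assoc]⟩
  have hsh' : ∀ m : M, m * (s m * h m) = m := fun m => by
    rw [← mul_assoc]; exact hsh m
  -- key: parts (i) and (iv), which need no induction and no stability
  have key : ∀ i, 1 ≤ i → i ≤ k →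
      rrel (x i) (m i) ∧ m i = x i * h (m (i - 1)) := by
    intro i h1 h2
    obtain ⟨⟨u, hu⟩, _⟩ := hchain i h1 h2
    have hxi := hx i h1 h2
    have hiv : m i = x i * h (m (i - 1)) := by
      rw [hxi, hu]
      simp only [mul_assoc]
      rw [hsh']
    exact ⟨⟨⟨s (m (i - 1)), hxi⟩, ⟨h (m (i - 1)), hiv⟩⟩, hiv⟩
  refine ⟨⟨⟨1, by rw [hx0, hm0, one_mul]⟩, ⟨1, by rw [hx0, hm0, one_mul]⟩⟩, ?_⟩
  intro i h1 h2
  obtain ⟨p, rfl⟩ : ∃ p, i = p + 1 := ⟨i - 1, (Nat.succ_pred_eq_of_pos h1).symm⟩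
  have hp : p + 1 - 1 = p := by omega
  rw [hp]
  obtain ⟨hri, hiv⟩ := key (p + 1) h1 h2
  have hrp : rrel (x p) (m p) := by
    rcases Nat.eq_zero_or_pos p with h0 | h0
    · subst h0
      exact ⟨⟨1, by rw [hx0, hm0, one_mul]⟩, ⟨1, by rw [hx0, hm0, one_mul]⟩⟩
    · exact (key p h0 (le_trans (Nat.le_succ p) h2)).1
  have heq : x p * s (x p) = m p * s (m p) := hR _ _ hrp
  obtain ⟨⟨u, hu⟩, hnle⟩ := hchain (p + 1) h1 h2
  rw [hp] at hu hnle hiv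
  have hxi := hx (p + 1) h1 h2
  rw [hp] at hxi
  -- part (ii)
  have hlle : lle (x (p + 1)) (x p * s (x p)) := by
    rw [heq, hxi, hu]
    exact ⟨u, (mul_assoc _ _ _)⟩
  have hnlle : ¬ lle (x p * s (x p)) (x (p + 1)) := by
    rintro ⟨w, hw⟩
    rw [heq] at hw
    apply hnle
    refine ⟨w, ?_⟩
    have : m p * s (m p) * h (m p) = w * x (p + 1) * h (m p) := by rw [hw]
    rw [hsh, mul_assoc, ← hiv] at this
    exact this
  refine ⟨hri, ⟨hlle, hnlle⟩, ⟨?_, ?_⟩, hiv⟩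
  · -- jle (x (p+1)) (x p)
    exact jle_trans _ _ _ (lle_jle _ _ hlle) (rle_jle _ _ (hs (x p)).1)
  · -- ¬ jle (x p) (x (p+1))
    intro hj
    obtain ⟨w, hw⟩ := hlle
    have hjrel : jrel (w * (x p * s (x p))) (x p * s (x p)) := by
      rw [← hw]
      constructor
      · exact lle_jle _ _ ⟨w, hw⟩
      · exact jle_trans _ _ _ (rle_jle _ _ (hs (x p)).1) hj
    have := (hM (x p * s (x p)) w).2 hjrel
    rw [← hw] at this
    exact hnlle this.2
end

section
/- Let M be a monoid and let s, h : M → M be maps such that m·s(m)·h(m) = m for every m ∈ M. Let (m_0, m_1, …, m_k) and (m'_0, m'_1, …, m'_k) be sequences in M with m_0 = m'_0 = 1, such that m_i ≤_L m_{i−1} and m'_i ≤_L m'_{i−1} for all 1 ≤ i ≤ k. If m_i·s(m_{i−1}) = m'_i·s(m'_{i−1}) for all 1 ≤ i ≤ k, then m_i = m'_i for all 0 ≤ i ≤ k. -/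
open GreenDefs in
/-- Injectivity of the Zeiger encoding map: if two `L`-descending sequences
starting at `1` have the same encoding `i ↦ m_i·s(m_{i-1})`, they coincide.
Here `s` and `h` satisfy `m·s(m)·h(m) = m` for every `m`. -/
theorem stmt_14 {M : Type*} [Monoid M] (s h : M → M)
    (hsh : ∀ m : M, m * s m * h m = m)
    (k : ℕ) (m m' : ℕ → M)
    (hm0 : m 0 = 1) (hm'0 : m' 0 = 1)
    (hm : ∀ i, 1 ≤ i → i ≤ k → lle (m i) (m (i - 1)))
    (hm' : ∀ i, 1 ≤ i → i ≤ k → lle (m' i) (m' (i - 1)))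
    (heq : ∀ i, 1 ≤ i → i ≤ k → m i * s (m (i - 1)) = m' i * s (m' (i - 1))) :
    ∀ i ≤ k, m i = m' i := by
  intro i
  induction i with
  | zero => intro _; rw [hm0, hm'0]
  | succ n ih =>
    intro hle
    have hn : m n = m' n := ih (Nat.le_of_succ_le hle)
    have h1 : 1 ≤ n + 1 := Nat.succ_le_succ (Nat.zero_le n)
    obtain ⟨u, hu⟩ := hm (n+1) h1 hle
    obtain ⟨v, hv⟩ := hm' (n+1) h1 hle
    simp only [Nat.add_sub_cancel] at hu hv
    have e := heq (n+1) h1 hle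
    simp only [Nat.add_sub_cancel] at e
    have key : m (n+1) * s (m n) * h (m n) = m (n+1) := by
      rw [hu, mul_assoc, mul_assoc, ← mul_assoc (m n), hsh]
    have key' : m' (n+1) * s (m' n) * h (m' n) = m' (n+1) := by
      rw [hv, mul_assoc, mul_assoc, ← mul_assoc (m' n), hsh]
    calc m (n+1) = m (n+1) * s (m n) * h (m n) := key.symm
      _ = m' (n+1) * s (m' n) * h (m' n) := by rw [e, hn]
      _ = m' (n+1) := key'
end

section
/- Let M be a finite J-above, stable monoid and let a, b ∈ M satisfy a ≤_L b and h_J(a) = h_J(b). Then a L b. -/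
namespace GreenDefs

lemma jle_refl' {M : Type*} [Monoid M] (a : M) : jle a a := ⟨1, 1, by simp⟩

lemma jle_trans' {M : Type*} [Monoid M] {a b c : M} (h1 : jle a b) (h2 : jle b c) :
    jle a c := by
  obtain ⟨u, v, rfl⟩ := h1
  obtain ⟨u', v', rfl⟩ := h2
  exact ⟨u * u', v' * v, by simp [mul_assoc]⟩

lemma chain_jle {M : Type*} [Monoid M] {c : ℕ → M} {n : ℕ}
    (h : ∀ i < n, jlt (c i) (c (i + 1))) :
    ∀ i j, i ≤ j → j ≤ n → jle (c i) (c j) := by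
  intro i j hij hjn
  induction j with
  | zero => obtain rfl := Nat.le_zero.mp hij; exact jle_refl' _
  | succ j ih =>
    rcases Nat.lt_or_ge i (j + 1) with h1 | h2
    · exact jle_trans' (ih (Nat.lt_succ_iff.mp h1) (le_trans (Nat.le_succ j) hjn))
        (h j (Nat.lt_of_succ_le hjn)).1
    · obtain rfl : i = j + 1 := le_antisymm hij h2
      exact jle_refl' _

lemma chain_bdd {M : Type*} [Monoid M] (hfin : ∀ a : M, {b : M | jle a b}.Finite) (a : M) :
    BddAbove {n : ℕ | ∃ c : ℕ → M, c 0 = a ∧ ∀ i < n, jlt (c i) (c (i + 1))} := by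
  refine ⟨(hfin a).toFinset.card, ?_⟩
  rintro n ⟨c, hc0, hchain⟩
  have hinj : Set.InjOn (fun k : Fin (n + 1) => c k) ↑(Finset.univ : Finset (Fin (n + 1))) := by
    intro i _ j _ hij
    have hij' : c (i : ℕ) = c (j : ℕ) := hij
    by_contra hne
    have hne' : (i : ℕ) ≠ (j : ℕ) := fun h => hne (Fin.ext h)
    rcases hne'.lt_or_gt with hlt | hlt
    · have h1 := chain_jle hchain ((i : ℕ) + 1) (j : ℕ) hlt (Nat.lt_succ_iff.mp j.isLt)
      rw [← hij'] at h1
      exact (hchain (i : ℕ) (lt_of_lt_of_le hlt (Nat.lt_succ_iff.mp j.isLt))).2 h1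
    · have h1 := chain_jle hchain ((j : ℕ) + 1) (i : ℕ) hlt (Nat.lt_succ_iff.mp i.isLt)
      rw [hij'] at h1
      exact (hchain (j : ℕ) (lt_of_lt_of_le hlt (Nat.lt_succ_iff.mp i.isLt))).2 h1
  have hmaps : ∀ k : Fin (n + 1), k ∈ Finset.univ →
      (fun k : Fin (n + 1) => c k) k ∈ (hfin a).toFinset := by
    intro k _
    simp only [Set.Finite.mem_toFinset, Set.mem_setOf_eq]
    have := chain_jle hchain 0 k (Nat.zero_le _) (Nat.lt_succ_iff.mp k.isLt)
    rwa [hc0] at this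
  have := Finset.card_le_card_of_injOn _ hmaps hinj
  simp only [Finset.card_univ, Fintype.card_fin] at this
  omega

end GreenDefs

open GreenDefs in
/-- In a finite `J`-above stable monoid, `L`-comparable elements of equal
`J`-height are `L`-equivalent. Here `h_J(a)` is the largest `n` such that there is
a chain `a = a_0 <_J a_1 <_J ⋯ <_J a_n`. -/
theorem stmt_15 {M : Type*} [Monoid M]
    (hfin : ∀ a : M, {b : M | jle a b}.Finite)
    (hstable : Stable M)
    (hJ : M → ℕ)
    (hhJ : ∀ a : M, hJ a =
      sSup {n : ℕ | ∃ c : ℕ → M, c 0 = a ∧ ∀ i < n, jlt (c i) (c (i + 1))})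
    (a b : M) (hab : lle a b) (heq : hJ a = hJ b) :
    lrel a b := by
  obtain ⟨u, hu⟩ := hab
  have hjle : jle a b := ⟨u, 1, by simp [hu]⟩
  by_cases hba : jle b a
  · -- a J b, use stability
    have := (hstable b u).2 ⟨hu ▸ hjle, hu ▸ hba⟩
    rw [← hu] at this
    exact this
  · -- a <_J b, contradiction with equal heights
    exfalso
    set Sb := {n : ℕ | ∃ c : ℕ → M, c 0 = b ∧ ∀ i < n, jlt (c i) (c (i + 1))}
    have hbnb : (0 : ℕ) ∈ Sb := ⟨fun _ => b, rfl, by omega⟩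
    have hmem : hJ b ∈ Sb := by
      rw [hhJ b]
      exact Nat.sSup_mem ⟨0, hbnb⟩ (chain_bdd hfin b)
    obtain ⟨c, hc0, hchain⟩ := hmem
    -- prepend a
    set c' : ℕ → M := fun k => Nat.rec a (fun i _ => c i) k with hc'
    have hmem' : hJ b + 1 ∈ {n : ℕ | ∃ d : ℕ → M, d 0 = a ∧ ∀ i < n, jlt (d i) (d (i + 1))} := by
      refine ⟨c', rfl, ?_⟩
      intro i hi
      cases i with
      | zero =>
        show jlt a (c 0)
        rw [hc0]
        exact ⟨hjle, hba⟩
      | succ i =>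
        show jlt (c i) (c (i + 1))
        exact hchain i (by omega)
    have : hJ b + 1 ≤ hJ a := by
      rw [hhJ a]
      exact le_csSup (chain_bdd hfin a) hmem'
    omega
end

section
/- Let M be a monoid such that { b ∈ M | a ≤_J b } is finite for every a ∈ M (M is finite J-above). Then M is stable: for all a, x ∈ M, a·x J a implies a·x R a, and x·a J a implies x·a L a. -/
open GreenDefs

private lemma key_iter {M : Type*} [Monoid M] {a u w : M} (h : a = u * a * w) :
    ∀ k : ℕ, a = u ^ k * a * w ^ k := by
  intro k
  induction k with
  | zero => simp
  | succ k ih =>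
    calc a = u ^ k * a * w ^ k := ih
    _ = u ^ k * (u * a * w) * w ^ k := by rw [← h]
    _ = u ^ (k + 1) * a * w ^ (k + 1) := by
        rw [pow_succ, pow_succ']; group

private lemma pigeon {M : Type*} [Monoid M] {a : M} {f : ℕ → M}
    (hfin : ({b : M | jle a b}).Finite) (hmem : ∀ k, jle a (f k)) :
    ∃ m n : ℕ, m < n ∧ f m = f n := by
  have : ∃ m ∈ (Set.univ : Set ℕ), ∃ n ∈ (Set.univ : Set ℕ), m ≠ n ∧ f m = f n :=
    Set.infinite_univ.exists_ne_map_eq_of_mapsTo (fun k _ => by exact hmem k) hfin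
  obtain ⟨m, -, n, -, hmn, heq⟩ := this
  rcases hmn.lt_or_gt with h | h
  · exact ⟨m, n, h, heq⟩
  · exact ⟨n, m, h, heq.symm⟩

private lemma right_abs {M : Type*} [Monoid M]
    (hfin : ∀ a : M, {b : M | jle a b}.Finite) {a u w : M} (h : a = u * a * w) :
    ∃ j : ℕ, a = a * (w * w ^ j) := by
  obtain ⟨m, n, hmn, heq⟩ := pigeon (hfin a)
    (f := fun k => a * w ^ k)
    (fun k => ⟨u ^ k, 1, by rw [mul_one, ← mul_assoc]; exact key_iter h k⟩)
  obtain ⟨j, rfl⟩ : ∃ j, n = m + (j + 1) := ⟨n - m - 1, by omega⟩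
  refine ⟨j, ?_⟩
  calc a = u ^ m * a * w ^ m := key_iter h m
  _ = u ^ m * (a * w ^ m) := by rw [mul_assoc]
  _ = u ^ m * (a * w ^ (m + (j + 1))) := by rw [heq]
  _ = (u ^ m * a * w ^ m) * w ^ (j + 1) := by rw [pow_add]; group
  _ = a * (w * w ^ j) := by rw [← key_iter h m, pow_succ']

private lemma left_abs {M : Type*} [Monoid M]
    (hfin : ∀ a : M, {b : M | jle a b}.Finite) {a u w : M} (h : a = u * a * w) :
    ∃ j : ℕ, a = (u ^ j * u) * a := by
  obtain ⟨m, n, hmn, heq⟩ := pigeon (hfin a)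
    (f := fun k => u ^ k * a)
    (fun k => ⟨1, w ^ k, by rw [one_mul]; exact key_iter h k⟩)
  obtain ⟨j, rfl⟩ : ∃ j, n = (j + 1) + m := ⟨n - m - 1, by omega⟩
  refine ⟨j, ?_⟩
  calc a = u ^ m * a * w ^ m := key_iter h m
  _ = (u ^ ((j + 1) + m) * a) * w ^ m := by rw [heq]
  _ = u ^ (j + 1) * (u ^ m * a * w ^ m) := by rw [pow_add]; group
  _ = (u ^ j * u) * a := by rw [← key_iter h m, pow_succ]

/-- Every finite `J`-above monoid is stable. -/
theorem stmt_19 {M : Type*} [Monoid M]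
    (hfin : ∀ a : M, {b : M | jle a b}.Finite) :
    Stable M := by
  intro a x
  constructor
  · rintro ⟨-, u, v, h⟩
    refine ⟨⟨x, rfl⟩, ?_⟩
    have h' : a = u * a * (x * v) := by nth_rewrite 1 [h]; group
    obtain ⟨j, hj⟩ := right_abs hfin h'
    exact ⟨v * (x * v) ^ j, by nth_rewrite 1 [hj]; group⟩
  · rintro ⟨-, u, v, h⟩
    refine ⟨⟨x, rfl⟩, ?_⟩
    have h' : a = (u * x) * a * v := by nth_rewrite 1 [h]; group
    obtain ⟨j, hj⟩ := left_abs hfin h'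
    exact ⟨(u * x) ^ j * u, by nth_rewrite 1 [hj]; group⟩
end
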